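/- Let 0 < T < T₀, set T₁ := T₀ - T, and let α ∈ (0,1/2), p ∈ [1,∞). Let Φ : (-∞,0] → E and U : (0,T] → E be strongly measurable, and define Û : (-∞,T₀] → E by Û = Φ on (-∞,0], Û = U on (0,T], Û = 0 on (T,T₀], and Φ̂ : (-∞,T₀] → E by Φ̂ = Φ on (-∞,0] and Φ̂ = 0 on (0,T₀]. Then for every t ∈ [0,T₁], ∫_{-∞}^0 g(r)·(∫_0^t (t-s)^{-2α}‖Û(T+s+r)‖^2 ds)^{p/2} dr ≤ 2^{p-1}·[ ∫_{-∞}^0 g(r)·(∫_0^t (t-s)^{-2α}‖Φ̂(T+s+r)‖^2 ds)^{p/2} dr + (∫_{-(t+T)}^0 g(r) dr)·sup_{t'∈[0,T]} (∫_0^{t'} (t'-u)^{-2α}‖U(u)‖^2 du)^{p/2} ]. -/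

import Mathlib

/-!
The extended solution `Û` is the sum of `Φ̂` and of `U` cut off to `(0, T]`, with
disjoint supports, so the inner integral splits as `A r + B r` and
`(A + B)^{p/2} ≤ 2^{p-1} (A^{p/2} + B^{p/2})`. The substitution `u = T + s + r` turns `B r` into
an integral of `‖U‖²` over `(0, T] ∩ (T + r, t + T + r]`, which is empty unless
`r ∈ [-(t+T), 0]`; on that window, since the kernel `(t - u)^{-2α}` decreases in `t`, it is
dominated by the kernel integral of `‖U‖²` up to `t' = min (t + T + r) T ∈ [0, T]`.
-/

open MeasureTheory Set ENNReal

theorem ENNReal.rpow_add_le_two_rpow_sub_one_mul {p q : ℝ} (hq : 0 ≤ q) (hqp : q ≤ p)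
    (hp : 1 ≤ p) (a b : ℝ≥0∞) :
    (a + b) ^ q ≤ 2 ^ (p - 1) * (a ^ q + b ^ q) := by
  rcases le_total q 1 with hq1 | hq1
  · calc (a + b) ^ q ≤ a ^ q + b ^ q := rpow_add_le_add_rpow a b hq hq1
      _ ≤ 2 ^ (p - 1) * (a ^ q + b ^ q) :=
        le_mul_of_one_le_left' <| by
          simpa using rpow_le_rpow_of_exponent_le (x := 2) (by norm_num)
            (by linarith : 0 ≤ p - 1)
  · calc (a + b) ^ q ≤ 2 ^ (q - 1) * (a ^ q + b ^ q) := rpow_add_le_mul_rpow_add_rpow a b hq1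
      _ ≤ 2 ^ (p - 1) * (a ^ q + b ^ q) := by gcongr; norm_num [hqp]

theorem setLIntegral_Ioc_comp_add_right (f : ℝ → ℝ≥0∞) (a b c : ℝ) :
    ∫⁻ s in Ioc a b, f (s + c) = ∫⁻ u in Ioc (a + c) (b + c), f u := by
  simpa using (measurePreserving_add_right volume c).setLIntegral_comp_preimage_emb
    (measurableEmbedding_addRight c) f (Ioc (a + c) (b + c))

noncomputable def kernelIntegral (α : ℝ) (f : ℝ → ℝ≥0∞) (t : ℝ) : ℝ≥0∞ :=
  ∫⁻ u in Ioc 0 t, ENNReal.ofReal ((t - u) ^ (-(2 * α))) * f u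

section kernelIntegral

variable {α : ℝ}

theorem kernelIntegral_add {f : ℝ → ℝ≥0∞} {t : ℝ}
    (hf : AEMeasurable f (volume.restrict (Ioc 0 t))) (g : ℝ → ℝ≥0∞) :
    kernelIntegral α (f + g) t = kernelIntegral α f t + kernelIntegral α g t := by
  simp only [kernelIntegral, Pi.add_apply, mul_add]
  exact lintegral_add_left' ((by fun_prop : Measurable fun u : ℝ =>
    ENNReal.ofReal ((t - u) ^ (-(2 * α)))).aemeasurable.mul hf) _

-- `0 ^ (-2α) = 0` for `Real.rpow`, so the kernels only compare off the endpoint `u = t₀`.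
theorem setLIntegral_Ioc_kernel_le_kernelIntegral (hα : 0 ≤ α) (f : ℝ → ℝ≥0∞) {t₀ t : ℝ}
    (ht : t₀ ≤ t) :
    ∫⁻ u in Ioc 0 t₀, ENNReal.ofReal ((t - u) ^ (-(2 * α))) * f u ≤
      kernelIntegral α f t₀ := by
  rw [kernelIntegral, ← setLIntegral_congr Ioo_ae_eq_Ioc,
    ← setLIntegral_congr Ioo_ae_eq_Ioc]
  refine setLIntegral_mono' measurableSet_Ioo fun u hu => ?_
  exact mul_le_mul_left (ofReal_le_ofReal <|
    Real.rpow_le_rpow_of_nonpos (sub_pos.2 hu.2) (by linarith) (by linarith)) _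

theorem kernelIntegral_indicator_comp_add_right_le (hα : 0 ≤ α) (f : ℝ → ℝ≥0∞) (t c T : ℝ) :
    kernelIntegral α (fun s => (Ioc 0 T).indicator f (s + c)) t ≤
      kernelIntegral α f (min (t + c) T) := by
  let F : ℝ → ℝ≥0∞ := fun u => ENNReal.ofReal ((t + c - u) ^ (-(2 * α))) * f u
  calc kernelIntegral α (fun s => (Ioc 0 T).indicator f (s + c)) t
      = ∫⁻ s in Ioc 0 t, (Ioc 0 T).indicator F (s + c) := by
        simp only [kernelIntegral, F, indicator_mul_right, add_sub_add_right_eq_sub]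
    _ = ∫⁻ u in Ioc 0 T ∩ Ioc c (t + c), F u := by
        rw [setLIntegral_Ioc_comp_add_right, zero_add, setLIntegral_indicator measurableSet_Ioc]
    _ ≤ ∫⁻ u in Ioc 0 (min (t + c) T), F u :=
        lintegral_mono_set fun u hu => ⟨hu.1.1, le_min hu.2.2 hu.1.2⟩
    _ ≤ kernelIntegral α f (min (t + c) T) :=
        setLIntegral_Ioc_kernel_le_kernelIntegral hα f (min_le_left _ _)

theorem kernelIntegral_indicator_shift_rpow_le_indicator (hα : 0 ≤ α) {T t q : ℝ}
    (hT : 0 ≤ T) (hq : 0 < q) (f : ℝ → ℝ≥0∞) (r : ℝ) :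
    kernelIntegral α (fun s => (Ioc 0 T).indicator f (T + s + r)) t ^ q ≤
      (Icc (-(t + T)) 0).indicator (fun _ => ⨆ t' ∈ Icc 0 T, kernelIntegral α f t' ^ q) r := by
  have hshift : (fun s => (Ioc 0 T).indicator f (T + s + r)) =
      fun s => (Ioc 0 T).indicator f (s + (T + r)) := by
    funext s; rw [add_comm T s, add_assoc]
  by_cases hr : r ∈ Icc (-(t + T)) 0
  · rw [indicator_of_mem hr, hshift]
    have hmin : min (t + (T + r)) T ∈ Icc 0 T :=
      ⟨le_min (by linarith [hr.1]) hT, min_le_right _ _⟩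
    calc _ ≤ kernelIntegral α f (min (t + (T + r)) T) ^ q :=
          rpow_le_rpow (kernelIntegral_indicator_comp_add_right_le hα f t (T + r) T) hq.le
      _ ≤ _ := le_biSup (fun t' => kernelIntegral α f t' ^ q) hmin
  · rw [indicator_of_notMem hr, nonpos_iff_eq_zero, rpow_eq_zero_iff]
    refine Or.inl ⟨setLIntegral_eq_zero measurableSet_Ioc fun s hs => ?_, hq⟩
    have hsT : T + s + r ∉ Ioc 0 T := fun h =>
      hr ⟨by linarith [h.1, hs.2], by linarith [h.2, hs.1]⟩
    simp [indicator_of_notMem hsT]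

end kernelIntegral

theorem setLIntegral_mul_rpow_add_le {X : Type*} [MeasurableSpace X] {μ : Measure X}
    {p q : ℝ} (hq : 0 ≤ q) (hqp : q ≤ p) (hp : 1 ≤ p) {s t : Set X} (hs : MeasurableSet s)
    (hst : s ⊆ t) {w A B : X → ℝ≥0∞} (hw : AEMeasurable w (μ.restrict s)) {S : ℝ≥0∞}
    (hB : ∀ x, B x ^ q ≤ s.indicator (fun _ => S) x) :
    ∫⁻ x in t, w x * (A x + B x) ^ q ∂μ ≤
      2 ^ (p - 1) * (∫⁻ x in t, w x * A x ^ q ∂μ + (∫⁻ x in s, w x ∂μ) * S) := by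
  have hpt : ∀ x,
      w x * (A x + B x) ^ q ≤ 2 ^ (p - 1) * (w x * A x ^ q + s.indicator w x * S) := by
    intro x
    calc w x * (A x + B x) ^ q
        ≤ w x * (2 ^ (p - 1) * (A x ^ q + s.indicator (fun _ => S) x)) := by
          gcongr
          exact (rpow_add_le_two_rpow_sub_one_mul hq hqp hp _ _).trans (by gcongr; exact hB x)
      _ = 2 ^ (p - 1) * (w x * A x ^ q + s.indicator w x * S) := by
          by_cases hx : x ∈ s <;> simp [hx] <;> ring
  have hw_ind : AEMeasurable (s.indicator w) (μ.restrict t) :=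
    (aemeasurable_indicator_iff hs).2 <| by
      rwa [Measure.restrict_restrict hs, inter_eq_left.2 hst]
  calc ∫⁻ x in t, w x * (A x + B x) ^ q ∂μ
      ≤ ∫⁻ x in t, 2 ^ (p - 1) * (w x * A x ^ q + s.indicator w x * S) ∂μ :=
        lintegral_mono hpt
    _ = 2 ^ (p - 1) * (∫⁻ x in t, w x * A x ^ q ∂μ + (∫⁻ x in s, w x ∂μ) * S) := by
      rw [lintegral_const_mul' _ _ (rpow_ne_top_of_nonneg (by linarith) ofNat_ne_top),
        lintegral_add_right' _ (hw_ind.mul_const S), lintegral_mul_const'' S hw_ind,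
        setLIntegral_indicator hs, inter_eq_left.2 hst]

theorem nnnorm_ite_ite_sq_eq_add_indicator {E : Type*} [SeminormedAddGroup E] (Φ U : ℝ → E)
    (T x : ℝ) :
    (‖if x ≤ 0 then Φ x else if x ≤ T then U x else 0‖₊ : ℝ≥0∞) ^ 2 =
      (‖if x ≤ 0 then Φ x else 0‖₊ : ℝ≥0∞) ^ 2 +
        (Ioc 0 T).indicator (fun u => (‖U u‖₊ : ℝ≥0∞) ^ 2) x := by
  by_cases hx0 : x ≤ 0 <;> by_cases hxT : x ≤ T <;>
    simp [hx0, hxT, indicator_apply]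

theorem shifted_solution_history_kernel_estimate_general
    {E : Type*} [NormedAddCommGroup E]
    (p : ℝ) (hp : 1 ≤ p)
    (g : ℝ → ℝ)
    (hg_int : ∀ r : ℝ, 0 ≤ r → IntegrableOn g (Set.Icc (-r) 0))
    (T T₀ α : ℝ) (hT : 0 < T) (hα : α ∈ Set.Ioo (0:ℝ) (1/2))
    (Φ U : ℝ → E) (hΦ_meas : StronglyMeasurable Φ)
    (t : ℝ) (ht : t ∈ Set.Icc 0 (T₀ - T)) :
    (∫⁻ r in Set.Iic (0:ℝ), ENNReal.ofReal (g r) *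
        (∫⁻ s in Set.Ioc (0:ℝ) t,
          ENNReal.ofReal ((t - s) ^ (-(2*α))) *
            (‖(if T + s + r ≤ 0 then Φ (T + s + r)
                else if T + s + r ≤ T then U (T + s + r) else 0)‖₊ : ℝ≥0∞) ^ 2)
          ^ (p/2)) ≤
      (2 : ℝ≥0∞) ^ (p - 1) *
        ((∫⁻ r in Set.Iic (0:ℝ), ENNReal.ofReal (g r) *
            (∫⁻ s in Set.Ioc (0:ℝ) t,
              ENNReal.ofReal ((t - s) ^ (-(2*α))) *
                (‖(if T + s + r ≤ 0 then Φ (T + s + r) else 0)‖₊ : ℝ≥0∞) ^ 2) ^ (p/2)) +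
          (∫⁻ r in Set.Icc (-(t + T)) (0:ℝ), ENNReal.ofReal (g r)) *
            ⨆ t' ∈ Set.Icc (0:ℝ) T,
              (∫⁻ u in Set.Ioc (0:ℝ) t',
                ENNReal.ofReal ((t' - u) ^ (-(2*α))) * (‖U u‖₊ : ℝ≥0∞) ^ 2) ^ (p/2)) := by
  have hq : (0 : ℝ) < p / 2 := by linarith
  have hΦ_trunc : Measurable fun x : ℝ => (‖if x ≤ 0 then Φ x else 0‖₊ : ℝ≥0∞) ^ 2 :=
    (hΦ_meas.ite measurableSet_Iic stronglyMeasurable_const).enorm.pow_const 2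
  have hg :
      AEMeasurable (fun r => ENNReal.ofReal (g r)) (volume.restrict (Icc (-(t + T)) 0)) :=
    (hg_int _ (by linarith [ht.1])).aemeasurable.ennreal_ofReal
  calc _ = ∫⁻ r in Iic 0, ENNReal.ofReal (g r) *
        (kernelIntegral α
            (fun s => (‖if T + s + r ≤ 0 then Φ (T + s + r) else 0‖₊ : ℝ≥0∞) ^ 2) t +
          kernelIntegral α
            (fun s => (Ioc 0 T).indicator (fun u => (‖U u‖₊ : ℝ≥0∞) ^ 2) (T + s + r)) t)
          ^ (p / 2) := by
        simp_rw [nnnorm_ite_ite_sq_eq_add_indicator]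
        refine lintegral_congr fun r => ?_
        congr 2
        exact kernelIntegral_add (hΦ_trunc.comp (by fun_prop)).aemeasurable _
    _ ≤ _ := setLIntegral_mul_rpow_add_le hq.le (by linarith) hp measurableSet_Icc
        Icc_subset_Iic_self hg
        (kernelIntegral_indicator_shift_rpow_le_indicator hα.1.le hT.le hq _)

/-- with `Û = Φ` on `(-∞,0]`, `U` on `(0,T]`, `0` on `(T,T₀]`, and
`Φ̂ = Φ` on `(-∞,0]`, `0` on `(0,T₀]`, for every `t ∈ [0,T₁]`, `T₁ = T₀ - T`
(in the extended reals):
`∫_{-∞}^0 g(r)·(∫_0^t (t-s)^{-2α}‖Û(T+s+r)‖² ds)^{p/2} dr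
  ≤ 2^{p-1}·[ ∫_{-∞}^0 g(r)·(∫_0^t (t-s)^{-2α}‖Φ̂(T+s+r)‖² ds)^{p/2} dr
    + (∫_{-(t+T)}^0 g(r) dr)·sup_{t'∈[0,T]} (∫_0^{t'} (t'-u)^{-2α}‖U(u)‖² du)^{p/2} ]`. -/
theorem shifted_solution_history_kernel_estimate
    {E : Type*} [NormedAddCommGroup E] [NormedSpace ℝ E] [CompleteSpace E]
    (p : ℝ) (hp : 1 ≤ p)
    (g G : ℝ → ℝ)
    (hg_pos : ∀ θ ≤ (0:ℝ), 0 < g θ)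
    (hg_int : ∀ r : ℝ, 0 ≤ r → IntegrableOn g (Set.Icc (-r) 0))
    (hG_nonneg : ∀ s ≤ (0:ℝ), 0 ≤ G s)
    (hG_locbdd : ∀ r : ℝ, 0 ≤ r → ∃ C : ℝ, ∀ s ∈ Set.Icc (-r) 0, G s ≤ C)
    (hGg : ∀ s ≤ (0:ℝ),
      ∀ᵐ θ ∂(volume.restrict (Set.Iic (0:ℝ))), g (s + θ) ≤ G s * g θ)
    (T T₀ α : ℝ) (hT : 0 < T) (hTT₀ : T < T₀) (hα : α ∈ Set.Ioo (0:ℝ) (1/2))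
    (Φ U : ℝ → E) (hΦ_meas : StronglyMeasurable Φ) (hU_meas : StronglyMeasurable U)
    (t : ℝ) (ht : t ∈ Set.Icc 0 (T₀ - T)) :
    (∫⁻ r in Set.Iic (0:ℝ), ENNReal.ofReal (g r) *
        (∫⁻ s in Set.Ioc (0:ℝ) t,
          ENNReal.ofReal ((t - s) ^ (-(2*α))) *
            (‖(if T + s + r ≤ 0 then Φ (T + s + r)
                else if T + s + r ≤ T then U (T + s + r) else 0)‖₊ : ℝ≥0∞) ^ 2)
          ^ (p/2)) ≤
      (2 : ℝ≥0∞) ^ (p - 1) *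
        ((∫⁻ r in Set.Iic (0:ℝ), ENNReal.ofReal (g r) *
            (∫⁻ s in Set.Ioc (0:ℝ) t,
              ENNReal.ofReal ((t - s) ^ (-(2*α))) *
                (‖(if T + s + r ≤ 0 then Φ (T + s + r) else 0)‖₊ : ℝ≥0∞) ^ 2) ^ (p/2)) +
          (∫⁻ r in Set.Icc (-(t + T)) (0:ℝ), ENNReal.ofReal (g r)) *
            ⨆ t' ∈ Set.Icc (0:ℝ) T,
              (∫⁻ u in Set.Ioc (0:ℝ) t',
                ENNReal.ofReal ((t' - u) ^ (-(2*α))) * (‖U u‖₊ : ℝ≥0∞) ^ 2) ^ (p/2)) :=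
  shifted_solution_history_kernel_estimate_general p hp g hg_int T T₀ α hT hα Φ U hΦ_meas t ht
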